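/- For every positive integer d, every v ∈ {0,1}^d with e_{d−1} ≺_rlex v (so that P(v) is full-dimensional in ℝ^d), and every i ∈ coSig(v): the inequality x_i + Σ_{j ∈ Sig_{>i}(v)} x_j ≤ |Sig_{>i}(v)| defines a facet of P(v) if and only if i > sig_{s(v)}(v) (i.e., i is greater than the minimum element of Sig(v)). -/

import Mathlib

open Finset

/-- The set of 0/1-vectors in ℝ^d. -/
def ZeroOne (d : ℕ) : Set (Fin d → ℝ) := {x | ∀ i, x i = 0 ∨ x i = 1}

/-- `x` is reverse-lexicographically smaller than `y`:
there is an index `m` with `x m < y m` and `x i = y i` for all `i > m`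
(equivalently, `x m < y m` for `m` the largest index where `x` and `y` differ). -/
def RlexLt {d : ℕ} (x y : Fin d → ℝ) : Prop :=
  ∃ m : Fin d, x m < y m ∧ ∀ i : Fin d, m < i → x i = y i

/-- `X(v)`: the 0/1-points revlex-smaller than `v`. -/
def Xset {d : ℕ} (v : Fin d → ℝ) : Set (Fin d → ℝ) :=
  {x | x ∈ ZeroOne d ∧ RlexLt x v}

/-- The revlex-initial 0/1-polytope `P(v) = conv X(v)`. -/
noncomputable def Pset {d : ℕ} (v : Fin d → ℝ) : Set (Fin d → ℝ) :=
  convexHull ℝ (Xset v)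

/-- `Sig(v)`: the support of `v` (the indices of its one-entries). -/
noncomputable def Sig {d : ℕ} (v : Fin d → ℝ) : Finset (Fin d) :=
  @Finset.filter (Fin d) (fun i => v i = 1) (Classical.decPred _) Finset.univ

/-- `Sig_{>i}(v)`: the elements of `Sig(v)` above `i`. -/
noncomputable def SigGt {d : ℕ} (v : Fin d → ℝ) (i : Fin d) : Finset (Fin d) :=
  (Sig v).filter (fun j => i < j)

/-- The dimension of the affine hull of a set in ℝ^d. -/
noncomputable def adim {d : ℕ} (s : Set (Fin d → ℝ)) : ℕ :=
  Module.finrank ℝ (affineSpan ℝ s).direction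

/-- A face of a polytope: a convex extreme subset. -/
def IsFaceOf {d : ℕ} (P F : Set (Fin d → ℝ)) : Prop :=
  Convex ℝ F ∧ IsExtreme ℝ P F

/-- The number of indices satisfying a predicate. -/
noncomputable def cnt {d : ℕ} (p : Fin d → Prop) : ℕ :=
  (@Finset.filter (Fin d) p (Classical.decPred _) Finset.univ).card

/-!
Every point of `X(v)` vanishes somewhere on `T = {i} ∪ Sig_{>i}(v)`: at its revlex witness if
that lies above `i`, and otherwise at `i`, where it agrees with `v`. This gives validity. If `i`
lies below `min Sig(v)`, the witness always lies in `Sig_{>i}(v)`, so the face also satisfies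
`x_i = 1` and has codimension two. Otherwise, using the largest element of `Sig(v)` below `i` as a
witness, the face contains the indicator vectors of `T \ {m}` for `m ∈ T` and of
`(T \ {d-1}) ∪ {t}` for `t ∉ T`; their differences together with `e_{d-1}` span `ℝ^d`.
-/

section LinearAlgebra

variable {K V W : Type*} [Field K] [AddCommGroup V] [Module K V] [AddCommGroup W] [Module K W]

theorem Submodule.eq_top_of_forall_single_mem {ι : Type*} [Fintype ι] [DecidableEq ι]
    {p : Submodule K (ι → K)} (h : ∀ t, Pi.single t (1 : K) ∈ p) : p = ⊤ := by
  rw [eq_top_iff, ← (Pi.basisFun K ι).span_eq, Submodule.span_le]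
  rintro _ ⟨t, rfl⟩
  simpa using h t

theorem vectorSpan_le_ker_of_forall_eq {s : Set V} {f : V →ₗ[K] W} {c : W}
    (h : ∀ x ∈ s, f x = c) : vectorSpan K s ≤ LinearMap.ker f := by
  rw [vectorSpan_def, Submodule.span_le]
  rintro _ ⟨x, hx, y, hy, rfl⟩
  simp [h x hx, h y hy]

theorem finrank_vectorSpan_add_finrank_le [FiniteDimensional K V] [FiniteDimensional K W]
    {s : Set V} {f : V →ₗ[K] W} (hf : Function.Surjective f) {c : W}
    (h : ∀ x ∈ s, f x = c) :
    Module.finrank K (vectorSpan K s) + Module.finrank K W ≤ Module.finrank K V := by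
  have hrank := LinearMap.finrank_range_add_finrank_ker f
  rw [LinearMap.range_eq_top.2 hf, finrank_top] at hrank
  have := Submodule.finrank_mono (vectorSpan_le_ker_of_forall_eq h)
  omega

theorem finrank_le_finrank_add_one_of_sup_span_singleton_eq_top [FiniteDimensional K V]
    {p : Submodule K V} {u : V} (h : p ⊔ K ∙ u = ⊤) :
    Module.finrank K V ≤ Module.finrank K p + 1 := by
  have hsup := Submodule.finrank_add_le_finrank_add_finrank p (K ∙ u)
  rw [h, finrank_top] at hsup
  have : Module.finrank K (K ∙ u) ≤ 1 := by
    simpa using finrank_span_le_card ({u} : Set V)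
  omega

end LinearAlgebra

theorem LinearMap.le_of_mem_convexHull {E : Type*} [AddCommGroup E] [Module ℝ E]
    (f : E →ₗ[ℝ] ℝ) {s : Set E} {r : ℝ} (h : ∀ x ∈ s, f x ≤ r) {x : E}
    (hx : x ∈ convexHull ℝ s) : f x ≤ r :=
  convexHull_min h (convex_halfSpace_le f.isLinear r) hx

section CharVec

variable {ι : Type*} [DecidableEq ι]

noncomputable def charVec (A : Finset ι) : ι → ℝ := fun t => if t ∈ A then 1 else 0

theorem sum_charVec (T A : Finset ι) : ∑ j ∈ T, charVec A j = (T ∩ A).card := by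
  simp [charVec]

theorem charVec_sub_charVec_erase {A : Finset ι} {x : ι} (hx : x ∈ A) :
    charVec A - charVec (A.erase x) = Pi.single x 1 := by
  funext t
  by_cases h : t = x
  · subst h; simp [charVec, hx]
  · by_cases htA : t ∈ A <;> simp [charVec, h, htA]

theorem charVec_insert_sub_charVec {A : Finset ι} {x : ι} (hx : x ∉ A) :
    charVec (insert x A) - charVec A = Pi.single x 1 := by
  simpa [Finset.erase_insert hx] using charVec_sub_charVec_erase (Finset.mem_insert_self x A)

theorem charVec_mem_zeroOne {d : ℕ} (A : Finset (Fin d)) : charVec A ∈ ZeroOne d := by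
  intro t; by_cases h : t ∈ A <;> simp [charVec, h]

end CharVec

noncomputable def coordSum {ι : Type*} (T : Finset ι) : (ι → ℝ) →ₗ[ℝ] ℝ :=
  ∑ j ∈ T, LinearMap.proj j

@[simp]
theorem coordSum_apply {ι : Type*} (T : Finset ι) (x : ι → ℝ) :
    coordSum T x = ∑ j ∈ T, x j := by
  simp [coordSum, LinearMap.sum_apply]

theorem sum_le_card_sub_one_of_eq_zero {d : ℕ} {x : Fin d → ℝ} (hx : x ∈ ZeroOne d)
    {T : Finset (Fin d)} {m : Fin d} (hm : m ∈ T) (hxm : x m = 0) :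
    ∑ j ∈ T, x j ≤ T.card - 1 := by
  have hle : ∑ j ∈ T.erase m, x j ≤ (T.erase m).card := by
    simpa using Finset.sum_le_card_nsmul (T.erase m) x 1
      fun j _ => by rcases hx j with h | h <;> simp [h]
  calc ∑ j ∈ T, x j = ∑ j ∈ T.erase m, x j := by rw [← Finset.add_sum_erase T x hm, hxm, zero_add]
    _ ≤ (T.erase m).card := hle
    _ = T.card - 1 := by
      rw [Finset.card_erase_of_mem hm, Nat.cast_sub (Finset.card_pos.2 ⟨m, hm⟩), Nat.cast_one]

theorem isLeast_of_strictAntiOn_Icc {α : Type*} [LinearOrder α] {s : Set α} {f : ℕ → α}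
    {w : ℕ} (hf : StrictAntiOn f (Set.Icc 1 w))
    (hs : ∀ a, a ∈ s ↔ ∃ q, 1 ≤ q ∧ q ≤ w ∧ f q = a) (hne : s.Nonempty) : IsLeast s (f w) := by
  obtain ⟨a, ha⟩ := hne
  obtain ⟨q, hq1, hqw, -⟩ := (hs a).1 ha
  refine ⟨(hs _).2 ⟨w, hq1.trans hqw, le_rfl, rfl⟩, fun b hb => ?_⟩
  obtain ⟨r, hr1, hrw, rfl⟩ := (hs b).1 hb
  exact hf.antitoneOn ⟨hr1, hrw⟩ ⟨hr1.trans hrw, le_rfl⟩ hrw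

theorem le_finrank_vectorSpan_add_one {ι : Type*} [Fintype ι] [DecidableEq ι]
    {s : Set (ι → ℝ)} {T : Finset ι} {L : ι} (hL : L ∈ T)
    (herase : ∀ m ∈ T, charVec (T.erase m) ∈ s)
    (hinsert : ∀ t ∉ T, charVec (insert t (T.erase L)) ∈ s) :
    Fintype.card ι ≤ Module.finrank ℝ (vectorSpan ℝ s) + 1 := by
  have htop : vectorSpan ℝ s ⊔ ℝ ∙ Pi.single L 1 = ⊤ := by
    refine Submodule.eq_top_of_forall_single_mem fun t => ?_
    by_cases ht : t ∈ T
    · have hsplit : (Pi.single t 1 : ι → ℝ)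
          = (charVec (T.erase L) - charVec (T.erase t)) + Pi.single L 1 := by
        rw [← charVec_sub_charVec_erase ht, ← charVec_sub_charVec_erase hL]
        abel
      rw [hsplit]
      exact add_mem
        (Submodule.mem_sup_left (vsub_mem_vectorSpan ℝ (herase L hL) (herase t ht)))
        (Submodule.mem_sup_right (Submodule.mem_span_singleton_self _))
    · rw [← charVec_insert_sub_charVec fun h => ht (Finset.mem_of_mem_erase h)]
      exact Submodule.mem_sup_left (vsub_mem_vectorSpan ℝ (hinsert t ht) (herase L hL))
  simpa using finrank_le_finrank_add_one_of_sup_span_singleton_eq_top htop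

section RevlexPolytope

variable {d : ℕ} {v : Fin d → ℝ}

@[simp]
theorem mem_Sig {j : Fin d} : j ∈ Sig v ↔ v j = 1 := by simp [Sig]

theorem mem_SigGt {i j : Fin d} : j ∈ SigGt v i ↔ j ∈ Sig v ∧ i < j := by
  simp [SigGt]

theorem self_notMem_SigGt (i : Fin d) : i ∉ SigGt v i := by simp [mem_SigGt]

theorem add_sum_SigGt (i : Fin d) (x : Fin d → ℝ) :
    x i + ∑ j ∈ SigGt v i, x j = ∑ j ∈ insert i (SigGt v i), x j :=
  (Finset.sum_insert (self_notMem_SigGt i)).symm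

theorem eq_zero_of_notMem_Sig (hv : v ∈ ZeroOne d) {j : Fin d} (hj : j ∉ Sig v) : v j = 0 :=
  (hv j).resolve_right (by simpa using hj)

theorem exists_mem_Sig_of_mem_Xset (hv : v ∈ ZeroOne d) {x : Fin d → ℝ} (hx : x ∈ Xset v) :
    ∃ m ∈ Sig v, x m = 0 ∧ ∀ j, m < j → x j = v j := by
  obtain ⟨hx01, m, hm, habove⟩ := hx
  refine ⟨m, ?_, ?_, habove⟩ <;> rcases hv m with h | h <;> rcases hx01 m with h' | h' <;>
    simp_all <;> linarith

theorem charVec_mem_Xset (hv : v ∈ ZeroOne d) {A : Finset (Fin d)} {m : Fin d}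
    (hm : m ∈ Sig v) (hmA : m ∉ A) (habove : ∀ j, m < j → (j ∈ A ↔ j ∈ Sig v)) :
    charVec A ∈ Xset v := by
  refine ⟨charVec_mem_zeroOne A, m, by simp_all [charVec], fun j hj => ?_⟩
  by_cases hjA : j ∈ A
  · simp_all [charVec]
  · simp [charVec, hjA, eq_zero_of_notMem_Sig hv ((habove j hj).not.1 hjA)]

theorem charVec_mem_Xset_of_top (hv : v ∈ ZeroOne d) {L : Fin d} (hL : ∀ j, j ≤ L)
    (hLv : L ∈ Sig v) {A : Finset (Fin d)} (hLA : L ∉ A) : charVec A ∈ Xset v :=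
  charVec_mem_Xset hv hLv hLA fun j hj => absurd (hL j) hj.not_ge

theorem mem_Sig_of_rlexLt_single_top (hv : v ∈ ZeroOne d) {L : Fin d} (hL : ∀ j, j ≤ L)
    (h : RlexLt (Pi.single L 1) v) : L ∈ Sig v ∧ ∃ m ∈ Sig v, m < L := by
  obtain ⟨m, hm, habove⟩ := h
  have hmL : m < L := by
    refine (hL m).lt_of_ne fun hmL => ?_
    subst hmL
    rcases hv m with h | h <;> norm_num [h] at hm
  refine ⟨by simp [← habove L hmL], m, ?_, hmL⟩
  rw [Pi.single_eq_of_ne hmL.ne] at hm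
  rcases hv m with h | h <;> simp_all

theorem vectorSpan_Xset_eq_top (hv : v ∈ ZeroOne d) {L m : Fin d} (hL : ∀ j, j ≤ L)
    (hLv : L ∈ Sig v) (hm : m ∈ Sig v) (hmL : m < L) : vectorSpan ℝ (Xset v) = ⊤ := by
  refine Submodule.eq_top_of_forall_single_mem fun t => ?_
  rcases eq_or_ne t L with rfl | htL
  · have hA : charVec ((Sig v).erase m) ∈ Xset v :=
      charVec_mem_Xset hv hm (Finset.notMem_erase m _) fun j hj => by simp [hj.ne']
    have hA' : charVec (((Sig v).erase m).erase t) ∈ Xset v :=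
      charVec_mem_Xset_of_top hv hL hLv (Finset.notMem_erase t _)
    rw [← charVec_sub_charVec_erase (Finset.mem_erase.2 ⟨hmL.ne', hLv⟩)]
    exact vsub_mem_vectorSpan ℝ hA hA'
  · have hA : charVec (insert t ∅) ∈ Xset v :=
      charVec_mem_Xset_of_top hv hL hLv (by simp [htL.symm])
    have hA' : charVec ∅ ∈ Xset v :=
      charVec_mem_Xset_of_top hv hL hLv (Finset.notMem_empty L)
    rw [← charVec_insert_sub_charVec (Finset.notMem_empty t)]
    exact vsub_mem_vectorSpan ℝ hA hA'

theorem adim_Pset (hv : v ∈ ZeroOne d) {L m : Fin d} (hL : ∀ j, j ≤ L)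
    (hLv : L ∈ Sig v) (hm : m ∈ Sig v) (hmL : m < L) : adim (Pset v) = d := by
  rw [adim, Pset, affineSpan_convexHull, direction_affineSpan,
    vectorSpan_Xset_eq_top hv hL hLv hm hmL, finrank_top, Module.finrank_fin_fun]

theorem exists_mem_insert_SigGt_eq_zero (hv : v ∈ ZeroOne d) {i : Fin d} (hi : i ∉ Sig v)
    {x : Fin d → ℝ} (hx : x ∈ Xset v) : ∃ j ∈ insert i (SigGt v i), x j = 0 := by
  obtain ⟨m, hm, hxm, habove⟩ := exists_mem_Sig_of_mem_Xset hv hx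
  rcases lt_trichotomy m i with hmi | rfl | him
  · exact ⟨i, Finset.mem_insert_self _ _, by rw [habove i hmi, eq_zero_of_notMem_Sig hv hi]⟩
  · exact absurd hm hi
  · exact ⟨m, Finset.mem_insert_of_mem (mem_SigGt.2 ⟨hm, him⟩), hxm⟩

theorem add_sum_SigGt_le (hv : v ∈ ZeroOne d) {i : Fin d} (hi : i ∉ Sig v)
    {x : Fin d → ℝ} (hx : x ∈ Pset v) : x i + ∑ j ∈ SigGt v i, x j ≤ (SigGt v i).card := by
  rw [add_sum_SigGt, ← coordSum_apply]
  refine (coordSum _).le_of_mem_convexHull (fun y hy => ?_) hx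
  obtain ⟨j, hj, hyj⟩ := exists_mem_insert_SigGt_eq_zero hv hi hy
  simpa [Finset.card_insert_of_notMem (self_notMem_SigGt i)] using
    sum_le_card_sub_one_of_eq_zero hy.1 hj hyj

theorem adim_face_add_two_le (hv : v ∈ ZeroOne d) {i : Fin d} (hmin : ∀ j ∈ Sig v, i < j)
    {L : Fin d} (hLv : L ∈ Sig v) :
    adim {x ∈ Pset v | x i + ∑ j ∈ SigGt v i, x j = (SigGt v i).card} + 2 ≤ d := by
  set S := SigGt v i
  have hLS : L ∈ S := mem_SigGt.2 ⟨hLv, hmin L hLv⟩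
  have hiS : i ∉ S := self_notMem_SigGt i
  have hxi_le : ∀ x ∈ Pset v, x i ≤ 1 := fun x hx =>
    (LinearMap.proj i).le_of_mem_convexHull
      (fun y hy => by rcases hy.1 i with h | h <;> simp [h]) hx
  have hsum_le : ∀ x ∈ Pset v, ∑ j ∈ S, x j ≤ S.card - 1 := fun x hx => by
    rw [← coordSum_apply]
    refine (coordSum S).le_of_mem_convexHull (fun y hy => ?_) hx
    obtain ⟨m, hm, hym, -⟩ := exists_mem_Sig_of_mem_Xset hv hy
    simpa using sum_le_card_sub_one_of_eq_zero hy.1 (mem_SigGt.2 ⟨hm, hmin m hm⟩) hym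
  have hsurj : Function.Surjective ((LinearMap.proj i).prod (coordSum S)) := by
    rintro ⟨a, b⟩
    refine ⟨Pi.single i a + Pi.single L b, ?_⟩
    simp [Finset.sum_add_distrib, Finset.sum_pi_single', hLS, hiS, (hmin L hLv).ne']
  have hrank := finrank_vectorSpan_add_finrank_le hsurj
    (s := {x ∈ Pset v | x i + ∑ j ∈ S, x j = S.card}) (c := (1, (S.card : ℝ) - 1))
    fun x ⟨hxP, hx⟩ => by
      have := hxi_le x hxP
      have := hsum_le x hxP
      ext <;> simp <;> linarith
  rw [adim, direction_affineSpan]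
  simpa using hrank

theorem charVec_erase_mem_Xset (hv : v ∈ ZeroOne d) {i : Fin d} (hi : i ∉ Sig v)
    (hk : ∃ k ∈ Sig v, k < i) {m : Fin d} (hm : m ∈ insert i (SigGt v i)) :
    charVec ((insert i (SigGt v i)).erase m) ∈ Xset v := by
  rcases Finset.mem_insert.1 hm with rfl | hmS
  · rw [Finset.erase_insert (self_notMem_SigGt m)]
    obtain ⟨k, hk, hkmax⟩ := ((Sig v).filter (· < m)).exists_max_image id
      (by obtain ⟨k, hk, hkm⟩ := hk; exact ⟨k, by simp [hk, hkm]⟩)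
    simp only [Finset.mem_filter, id] at hk hkmax
    refine charVec_mem_Xset hv hk.1 (by simp [mem_SigGt, hk.2.not_gt]) fun j hkj => ?_
    refine ⟨fun hj => (mem_SigGt.1 hj).1, fun hj => mem_SigGt.2 ⟨hj, ?_⟩⟩
    refine lt_of_le_of_ne (not_lt.1 fun hjm => (hkmax j ⟨hj, hjm⟩).not_gt hkj) ?_
    rintro rfl
    exact hi hj
  · obtain ⟨hmSig, him⟩ := mem_SigGt.1 hmS
    refine charVec_mem_Xset hv hmSig (Finset.notMem_erase m _) fun j hj => ?_
    simp [mem_SigGt, hj.ne', (him.trans hj).ne', him.trans hj]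

theorem adim_face_eq (hv : v ∈ ZeroOne d) {L : Fin d} (hL : ∀ j, j ≤ L) (hLv : L ∈ Sig v)
    {i : Fin d} (hi : i ∉ Sig v) (hk : ∃ k ∈ Sig v, k < i) :
    adim {x ∈ Pset v | x i + ∑ j ∈ SigGt v i, x j = (SigGt v i).card} = d - 1 := by
  set T := insert i (SigGt v i)
  have hcard : ((SigGt v i).card : ℝ) = T.card - 1 := by
    simp [T, Finset.card_insert_of_notMem (self_notMem_SigGt i)]
  simp only [add_sum_SigGt, hcard]
  set F := {x ∈ Pset v | ∑ j ∈ T, x j = T.card - 1}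
  have hLT : L ∈ T :=
    Finset.mem_insert_of_mem (mem_SigGt.2 ⟨hLv, (hL i).lt_of_ne fun h => hi (h ▸ hLv)⟩)
  have mem_F : ∀ m ∈ T, ∀ A, charVec A ∈ Xset v → T ∩ A = T.erase m → charVec A ∈ F := by
    intro m hm A hA hTA
    refine ⟨subset_convexHull ℝ _ hA, ?_⟩
    rw [sum_charVec, hTA, Finset.card_erase_of_mem hm,
      Nat.cast_sub (Finset.card_pos.2 ⟨m, hm⟩), Nat.cast_one]
  have hsurj : Function.Surjective (coordSum T) := fun a => ⟨Pi.single L a, by simp [hLT]⟩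
  have hupper := finrank_vectorSpan_add_finrank_le hsurj (s := F)
    fun x hx => (coordSum_apply T x).trans hx.2
  have hlower := le_finrank_vectorSpan_add_one hLT (s := F)
    (fun m hm => mem_F m hm _ (charVec_erase_mem_Xset hv hi hk hm)
      (Finset.inter_eq_right.2 (Finset.erase_subset m T)))
    (fun t ht => mem_F L hLT _
      (charVec_mem_Xset_of_top hv hL hLv (by simp [ne_of_mem_of_not_mem hLT ht]))
      (by rw [Finset.inter_insert_of_notMem ht,
        Finset.inter_eq_right.2 (Finset.erase_subset L T)]))
  rw [adim, direction_affineSpan]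
  simp only [Module.finrank_self, Module.finrank_fin_fun, Fintype.card_fin] at hupper hlower
  omega

end RevlexPolytope

/-- for full-dimensional `P(v)` and `i ∈ coSig(v)`, the inequality
`x_i + Σ_{j ∈ Sig_{>i}(v)} x_j ≤ |Sig_{>i}(v)|` defines a facet of `P(v)` iff
`i > sig_{s(v)}(v)`, i.e., `i` exceeds the minimum element of `Sig(v)`. -/
theorem stmt6 (d : ℕ) (hd : 0 < d) (v : Fin d → ℝ) (hv : v ∈ ZeroOne d)
    (hfull : RlexLt (Pi.single (⟨d - 1, by omega⟩ : Fin d) (1 : ℝ)) v)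
    (w : ℕ)
    (sig : ℕ → Fin d)
    (hanti : StrictAntiOn sig (Set.Icc 1 w))
    (himg : ∀ j : Fin d, j ∈ Sig v ↔ ∃ q, 1 ≤ q ∧ q ≤ w ∧ sig q = j)
    (i : Fin d) (hi : i ∉ Sig v) :
    ((∀ x ∈ Pset v, x i + ∑ j ∈ SigGt v i, x j ≤ ((SigGt v i).card : ℝ)) ∧
      adim {x ∈ Pset v | x i + ∑ j ∈ SigGt v i, x j = ((SigGt v i).card : ℝ)}
        = adim (Pset v) - 1)
    ↔ sig w < i := by
  have hL : ∀ j : Fin d, j ≤ ⟨d - 1, by omega⟩ := fun j => Nat.le_sub_one_of_lt j.isLt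
  obtain ⟨hLv, m, hm, hmL⟩ := mem_Sig_of_rlexLt_single_top hv hL hfull
  obtain ⟨hsig, hsig_le⟩ := isLeast_of_strictAntiOn_Icc hanti himg ⟨_, hLv⟩
  rw [adim_Pset hv hL hLv hm hmL]
  rcases lt_or_gt_of_ne fun h : i = sig w => hi (h ▸ hsig) with hlt | hgt
  · refine iff_of_false (fun ⟨_, hdim⟩ => ?_) hlt.not_gt
    have := adim_face_add_two_le hv (fun j hj => hlt.trans_le (hsig_le hj)) hLv
    omega
  · exact iff_of_true ⟨fun x hx => add_sum_SigGt_le hv hi hx,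
      adim_face_eq hv hL hLv hi ⟨_, hsig, hgt⟩⟩ hgt
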